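/- If the Tanner graph of H is acyclic (a forest) and the rows of H are linearly independent over GF(2), then the set of all rows of H admits a triangular enumeration. (Corollary 4: the label-and-decide algorithm can encode any tree LDPC code, i.e., any code whose Tanner graph is cycle-free.) -/

import Mathlib

/-- The Tanner graph of a parity check matrix `H` over GF(2): the simple bipartite graph
on `M ⊕ N` in which check node `i` is adjacent to bit node `j` iff `H i j = 1`. -/
def tannerGraph {M N : Type*} (H : Matrix M N (ZMod 2)) : SimpleGraph (M ⊕ N) where
  Adj v w :=
    match v, w with
    | Sum.inl i, Sum.inr j => H i j = 1
    | Sum.inr j, Sum.inl i => H i j = 1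
    | _, _ => False
  symm := by
    constructor
    intro v w h
    cases v <;> cases w <;> simp_all
  loopless := by
    constructor
    intro v h
    cases v <;> simp_all

/-- A triangular enumeration of a finite set `R` of rows of `H`. -/
def TriangularEnum {M N : Type*} [DecidableEq M] (H : Matrix M N (ZMod 2))
    (R : Finset M) : Prop :=
  ∃ (e : Fin R.card → M) (c : Fin R.card → N),
    Function.Injective e ∧ (∀ k, e k ∈ R) ∧
    Function.Injective c ∧
    (∀ k, H (e k) (c k) = 1) ∧
    (∀ k l, k < l → H (e k) (c l) = 0)

/-!
By strong induction on the set `R` of rows it suffices to find a row `i ∈ R` with a *private*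
column `j`: `H i j = 1` while `H i' j = 0` for the other rows `i' ∈ R`; placing `i` last with
parity bit `j` extends a triangular enumeration of `R \ {i}`.

A private column exists by counting. Restrict `H` to the rows `R` and to the set `C` of columns
meeting them; the restricted Tanner graph is still a forest and the rows stay independent, so
`|R| ≤ |C|`. If no column were private, every column of `C` would carry at least two ones, and
`2|C| ≤ #ones = #edges < |R| + |C| ≤ 2|C|`.
-/

open Finset SimpleGraph

theorem SimpleGraph.IsAcyclic.card_edgeFinset_lt {V : Type*} [Fintype V] [Nonempty V]
    {G : SimpleGraph V} [Fintype G.edgeSet] (hG : G.IsAcyclic) :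
    #G.edgeFinset < Fintype.card V := by
  classical
  obtain ⟨T, hGT, -, hT⟩ := connected_top.exists_isTree_le_of_le_of_isAcyclic le_top hG
  calc #G.edgeFinset ≤ #T.edgeFinset := card_le_card (edgeFinset_mono hGT)
    _ < Fintype.card V := by rw [← hT.card_edgeFinset]; exact Nat.lt_succ_self _

theorem Matrix.linearIndependent_submatrix_of_eq_zero {R M N : Type*} [Semiring R]
    {A : Matrix M N R} (hA : LinearIndependent R fun i => A i) {s : Set N}
    (hs : ∀ i, ∀ j ∉ s, A i j = 0) :
    LinearIndependent R fun i => A.submatrix id ((↑) : s → N) i := by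
  refine .of_comp (Function.ExtendByZero.linearMap R ((↑) : s → N)) ?_
  convert hA using 1
  ext i j
  by_cases hj : j ∈ s
  · exact Subtype.val_injective.extend_apply _ _ ⟨j, hj⟩
  · rw [hs i j hj]
    exact Function.extend_apply' _ _ _ fun ⟨a, ha⟩ => hj (ha ▸ a.2)

section Tanner

variable {M N : Type*} (H : Matrix M N (ZMod 2))

theorem tannerGraph_submatrix {M' N' : Type*} (f : M' → M) (g : N' → N) :
    tannerGraph (H.submatrix f g) = (tannerGraph H).comap (Sum.map f g) := by
  ext (_ | _) (_ | _) <;> rfl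

variable {H}

theorem isAcyclic_tannerGraph_submatrix {M' N' : Type*} (hH : (tannerGraph H).IsAcyclic)
    {f : M' → M} {g : N' → N} (hf : f.Injective) (hg : g.Injective) :
    (tannerGraph (H.submatrix f g)).IsAcyclic := by
  rw [tannerGraph_submatrix]
  exact hH.of_comap ⟨Sum.map f g, Sum.map_injective.2 ⟨hf, hg⟩⟩

variable [Fintype M] [Fintype N]

theorem card_ones_le_card_edgeFinset_tannerGraph [Fintype (tannerGraph H).edgeSet] :
    #{p : M × N | H p.1 p.2 = 1} ≤ #(tannerGraph H).edgeFinset := by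
  refine card_le_card_of_injOn (fun p => s(Sum.inl p.1, Sum.inr p.2)) ?_ ?_
  · intro p hp
    rw [mem_coe, mem_edgeFinset, mem_edgeSet]
    exact (mem_filter.1 hp).2
  · rintro ⟨i, j⟩ - ⟨i', j'⟩ - h
    simpa using h

theorem card_ones_lt_of_isAcyclic_tannerGraph [Nonempty M] (hH : (tannerGraph H).IsAcyclic) :
    #{p : M × N | H p.1 p.2 = 1} < Fintype.card M + Fintype.card N := by
  classical
  calc #{p : M × N | H p.1 p.2 = 1} ≤ #(tannerGraph H).edgeFinset :=
        card_ones_le_card_edgeFinset_tannerGraph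
    _ < Fintype.card (M ⊕ N) := hH.card_edgeFinset_lt
    _ = Fintype.card M + Fintype.card N := Fintype.card_sum

theorem two_mul_card_le_card_ones (h : ∀ j, 1 < #{i | H i j = 1}) :
    2 * Fintype.card N ≤ #{p : M × N | H p.1 p.2 = 1} :=
  calc 2 * Fintype.card N = ∑ _j : N, 2 := by simp [mul_comm]
    _ ≤ ∑ j, #{i | H i j = 1} := sum_le_sum fun j _ => h j
    _ = #{p : M × N | H p.1 p.2 = 1} := by
      simp only [card_filter]
      rw [Fintype.sum_prod_type_right]

theorem exists_private_column_of_isAcyclic_tannerGraph [Nonempty M]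
    (hH : (tannerGraph H).IsAcyclic)
    (hind : LinearIndependent (ZMod 2) fun i => H i) :
    ∃ i j, H i j = 1 ∧ ∀ i' ≠ i, H i' j = 0 := by
  classical
  by_contra! hshared
  let C : Set N := {j | ∃ i, H i j = 1}
  let H' := H.submatrix id ((↑) : C → N)
  have hC : ∀ i, ∀ j ∉ C, H i j = 0 := fun i j hj =>
    by_contra fun h => hj ⟨i, Fin.eq_one_of_ne_zero _ h⟩
  have hrows : Fintype.card M ≤ Fintype.card {j // j ∈ C} := by
    simpa using (Matrix.linearIndependent_submatrix_of_eq_zero hind hC).fintype_card_le_finrank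
  have hcols : ∀ j, 1 < #{i | H' i j = 1} := by
    rintro ⟨j, i, hij⟩
    obtain ⟨i', hi', hi'j⟩ := hshared i j hij
    exact one_lt_card.2 ⟨i, mem_filter.2 ⟨mem_univ _, hij⟩, i',
      mem_filter.2 ⟨mem_univ _, Fin.eq_one_of_ne_zero _ hi'j⟩, hi'.symm⟩
  have hforest := card_ones_lt_of_isAcyclic_tannerGraph (H := H')
    (isAcyclic_tannerGraph_submatrix hH Function.injective_id Subtype.val_injective)
  have := two_mul_card_le_card_ones hcols
  omega

end Tanner

theorem TriangularEnum.insert {M N : Type*} [DecidableEq M] {H : Matrix M N (ZMod 2)}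
    {R : Finset M} (hR : TriangularEnum H R) {i : M} (hi : i ∉ R) {j : N} (hij : H i j = 1)
    (hj : ∀ i' ∈ R, H i' j = 0) : TriangularEnum H (insert i R) := by
  obtain ⟨e, c, he, heR, hc, hdiag, hupper⟩ := hR
  rw [TriangularEnum, card_insert_of_notMem hi]
  refine ⟨Fin.snoc e i, Fin.snoc c j, ?_, ?_, ?_, ?_, ?_⟩
  · exact Fin.snoc_injective_of_injective he fun ⟨k, hk⟩ => hi (hk ▸ heR k)
  · refine Fin.lastCases ?_ fun k => ?_ <;> simp [heR]
  · refine Fin.snoc_injective_of_injective hc fun ⟨k, hk⟩ => ?_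
    simpa [hdiag k, ← hk] using hj _ (heR k)
  · refine Fin.lastCases ?_ fun k => ?_ <;> simp [hij, hdiag]
  · intro k l hkl
    induction l using Fin.lastCases with
    | last =>
      obtain ⟨k, rfl⟩ := Fin.exists_castSucc_eq.2 hkl.ne
      simpa using hj _ (heR k)
    | cast l =>
      obtain ⟨k, rfl⟩ := Fin.exists_castSucc_eq.2 (hkl.trans (Fin.castSucc_lt_last l)).ne
      simpa using hupper k l (Fin.castSucc_lt_castSucc_iff.1 hkl)

theorem triangularEnum_empty {M N : Type*} [DecidableEq M] (H : Matrix M N (ZMod 2)) :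
    TriangularEnum H ∅ :=
  ⟨finZeroElim, finZeroElim, fun k => k.elim0, fun k => k.elim0, fun k => k.elim0,
    fun k => k.elim0, fun k => k.elim0⟩

theorem exists_private_column_mem_of_isAcyclic_tannerGraph {M N : Type*} [Fintype N]
    {H : Matrix M N (ZMod 2)} (hH : (tannerGraph H).IsAcyclic)
    (hind : LinearIndependent (ZMod 2) fun i => H i) {R : Finset M} (hR : R.Nonempty) :
    ∃ i ∈ R, ∃ j, H i j = 1 ∧ ∀ i' ∈ R, i' ≠ i → H i' j = 0 := by
  have : Nonempty R := hR.to_subtype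
  obtain ⟨⟨i, hi⟩, j, hij, hpriv⟩ := exists_private_column_of_isAcyclic_tannerGraph
    (H := H.submatrix ((↑) : R → M) id)
    (isAcyclic_tannerGraph_submatrix hH Subtype.val_injective Function.injective_id)
    (hind.comp _ Subtype.val_injective)
  exact ⟨i, hi, j, hij, fun i' hi' hne => hpriv ⟨i', hi'⟩ (Subtype.coe_ne_coe.1 hne)⟩

theorem triangularEnum_of_isAcyclic_tannerGraph {M N : Type*} [DecidableEq M] [Fintype N]
    {H : Matrix M N (ZMod 2)} (hH : (tannerGraph H).IsAcyclic)
    (hind : LinearIndependent (ZMod 2) fun i => H i) (R : Finset M) : TriangularEnum H R := by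
  induction R using Finset.strongInduction with | H R ih => ?_
  obtain rfl | hR := R.eq_empty_or_nonempty
  · exact triangularEnum_empty H
  obtain ⟨i, hi, j, hij, hpriv⟩ := exists_private_column_mem_of_isAcyclic_tannerGraph hH hind hR
  rw [← Finset.insert_erase hi]
  exact (ih _ (erase_ssubset hi)).insert (notMem_erase i R) hij fun i' hi' =>
    hpriv i' (mem_of_mem_erase hi') (ne_of_mem_erase hi')

theorem acyclic_tanner_triangularEnum {M N : Type*} [Fintype M] [DecidableEq M]
    [Fintype N] (H : Matrix M N (ZMod 2))
    (hac : (tannerGraph H).IsAcyclic)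
    (hind : LinearIndependent (ZMod 2) (fun i : M => H i)) :
    TriangularEnum H Finset.univ :=
  triangularEnum_of_isAcyclic_tannerGraph hac hind univ
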